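/- arXiv:2005.03259 — 7 statements merged into one kernel-verified Lean document; each statement's English description precedes it below -/
import Mathlib

section
/- Let G = (V, E) be a finite simple graph with V nonempty. There exist (η, a) ∈ U^(1) and (ζ, b) ∈ U^(−1) with η + ζ = 0 and a + b = 0 if and only if all maximal cliques of G have the same size n and one of the following holds: (a) n = 1; (b) n = 2 and G has no chordless odd cycle of length at least 7; (c) n ≥ 3 and G has no chordless odd cycle of length at least 5. -/
variable {V : Type*}

/-- A stable (independent) set of a graph. -/
def IsStableSet (G : SimpleGraph V) (S : Set V) : Prop :=
  ∀ u ∈ S, ∀ v ∈ S, ¬ G.Adj u v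

/-- The vertex set of a cycle subgraph of `G`, given by an injective
parametrization `c : ZMod m → V` (`m ≥ 3`) with consecutive vertices adjacent. -/
def IsCycleSet (G : SimpleGraph V) (C : Set V) : Prop :=
  ∃ (m : ℕ) (c : ZMod m → V), 3 ≤ m ∧ Function.Injective c ∧
    (∀ i, G.Adj (c i) (c (i + 1))) ∧ C = Set.range c

/-- The vertex set of an odd cycle subgraph of `G`. -/
def IsOddCycleSet (G : SimpleGraph V) (C : Set V) : Prop :=
  ∃ (m : ℕ) (c : ZMod m → V), 3 ≤ m ∧ Odd m ∧ Function.Injective c ∧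
    (∀ i, G.Adj (c i) (c (i + 1))) ∧ C = Set.range c

/-- The vertex set of a chordless odd cycle subgraph of `G`: the only edges of `G`
between vertices of the cycle are the cycle edges. -/
def IsChordlessOddCycleSet (G : SimpleGraph V) (C : Set V) : Prop :=
  ∃ (m : ℕ) (c : ZMod m → V), 3 ≤ m ∧ Odd m ∧ Function.Injective c ∧
    (∀ i, G.Adj (c i) (c (i + 1))) ∧
    (∀ i j, G.Adj (c i) (c j) → j = i + 1 ∨ i = j + 1) ∧
    C = Set.range c

/-- A maximal clique of `G`. -/
def IsMaximalClique (G : SimpleGraph V) (K : Set V) : Prop :=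
  G.IsClique K ∧ ∀ K' : Set V, G.IsClique K' → K ⊆ K' → K = K'

/-- Membership in HSTAB(G). -/
def memHSTAB (G : SimpleGraph V) (f : V → ℝ) : Prop :=
  (∀ x, 0 ≤ f x) ∧
  (∀ K : Set V, G.IsClique K → (∑ᶠ v ∈ K, f v) ≤ 1) ∧
  (∀ C : Set V, IsOddCycleSet G C → (∑ᶠ v ∈ C, f v) ≤ ((C.ncard : ℝ) - 1) / 2)

/-- Membership in TSTAB(G). -/
def memTSTAB (G : SimpleGraph V) (f : V → ℝ) : Prop :=
  (∀ x, 0 ≤ f x ∧ f x ≤ 1) ∧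
  (∀ x y, G.Adj x y → f x + f y ≤ 1) ∧
  (∀ C : Set V, IsOddCycleSet G C → (∑ᶠ v ∈ C, f v) ≤ ((C.ncard : ℝ) - 1) / 2)

/-- Membership in QSTAB(G). -/
def memQSTAB (G : SimpleGraph V) (f : V → ℝ) : Prop :=
  (∀ x, 0 ≤ f x) ∧
  (∀ K : Set V, G.IsClique K → (∑ᶠ v ∈ K, f v) ≤ 1)

/-- The stable set polytope STAB(G). -/
def STAB (G : SimpleGraph V) : Set (V → ℝ) :=
  convexHull ℝ {f : V → ℝ | ∃ S : Set V, IsStableSet G S ∧ f = S.indicator 1}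

/-- The set `U^(n)` of the paper, as a predicate on pairs `(g, d)`. -/
def memU (G : SimpleGraph V) (n : ℤ) (g : V → ℤ) (d : ℤ) : Prop :=
  (∀ v, n ≤ g v) ∧
  (∀ K : Set V, IsMaximalClique G K → (∑ᶠ v ∈ K, g v) ≤ d - n) ∧
  (∀ C : Set V, IsChordlessOddCycleSet G C → 5 ≤ C.ncard →
    2 * (∑ᶠ v ∈ C, g v) ≤ d * ((C.ncard : ℤ) - 1) - 2 * n)

/-! Since `η ≥ 1`, `ζ ≥ -1` and `η + ζ = 0`, the pair is forced to be `η = 1`, `ζ = -1`,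
`b = -a`. The clique inequalities for `η` and `ζ` then say that every maximal clique has
exactly `a - 1` vertices, and the cycle inequalities say that every chordless odd cycle of
length `m ≥ 5` satisfies `a (m - 1) = 2 (m + 1)`. For `a = n + 1` this equation has the single
solution `n = 2`, `m = 5`; as `m` is odd, this rules out lengths `≥ 7` when `n = 2` and all
lengths when `n ≥ 3`, while for `n = 1` the graph has no edges and hence no cycles. -/

lemma finsum_mem_const_eq_ncard_nsmul {α M : Type*} [AddCommMonoid M] {s : Set α}
    (hs : s.Finite) (c : M) : ∑ᶠ _ ∈ s, c = s.ncard • c := by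
  rw [finsum_mem_eq_finite_toFinset_sum _ hs, Finset.sum_const, Set.ncard_eq_toFinset_card s hs]

section

variable {G : SimpleGraph V}

lemma exists_isMaximalClique_superset [Finite V] {S : Set V} (hS : G.IsClique S) :
    ∃ K, IsMaximalClique G K ∧ S ⊆ K := by
  obtain ⟨K, hSK, hK⟩ := Finite.exists_le_maximal (p := G.IsClique) hS
  exact ⟨K, ⟨hK.prop, fun K' hK' hKK' => hK.eq_of_subset hK' hKK'⟩, hSK⟩

lemma IsChordlessOddCycleSet.odd_ncard {C : Set V} (hC : IsChordlessOddCycleSet G C) :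
    Odd C.ncard := by
  obtain ⟨m, c, hm, hodd, hinj, -, -, rfl⟩ := hC
  have : NeZero m := ⟨by omega⟩
  rwa [← Nat.card_coe_set_eq, Nat.card_range_of_injective hinj, Nat.card_zmod]

lemma not_isChordlessOddCycleSet_of_ncard_eq_one [Finite V]
    (h : ∀ K, IsMaximalClique G K → K.ncard = 1) (C : Set V) : ¬ IsChordlessOddCycleSet G C := by
  rintro ⟨m, c, -, -, -, hadj, -, -⟩
  have hpair : G.IsClique {c 0, c (0 + 1)} := SimpleGraph.isClique_pair.mpr fun _ => hadj 0
  obtain ⟨K, hK, hsub⟩ := exists_isMaximalClique_superset hpair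
  have h2 : 2 ≤ K.ncard :=
    Set.ncard_pair (hadj 0).ne ▸ Set.ncard_le_ncard hsub (Set.toFinite K)
  have := h K hK
  omega

end

lemma memU_const_iff [Finite V] (G : SimpleGraph V) (n d : ℤ) :
    memU G n (fun _ => n) d ↔
      (∀ K, IsMaximalClique G K → K.ncard * n ≤ d - n) ∧
      (∀ C, IsChordlessOddCycleSet G C → 5 ≤ C.ncard →
        2 * (C.ncard * n) ≤ d * ((C.ncard : ℤ) - 1) - 2 * n) := by
  simp only [memU, le_refl, implies_true, true_and,
    finsum_mem_const_eq_ncard_nsmul (Set.toFinite _), nsmul_eq_mul]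

lemma exists_memU_one_memU_neg_one_iff [Finite V] (G : SimpleGraph V) :
    (∃ (η ζ : V → ℤ) (a b : ℤ), memU G 1 η a ∧ memU G (-1) ζ b ∧ η + ζ = 0 ∧ a + b = 0) ↔
      ∃ a : ℤ, (∀ K, IsMaximalClique G K → (K.ncard : ℤ) + 1 = a) ∧
        (∀ C, IsChordlessOddCycleSet G C → 5 ≤ C.ncard →
          a * ((C.ncard : ℤ) - 1) = 2 * ((C.ncard : ℤ) + 1)) := by
  constructor
  · rintro ⟨η, ζ, a, b, hη, hζ, hsum, hab⟩
    have hηζ : ∀ v, η v = 1 ∧ ζ v = -1 := fun v => by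
      have hv := congrFun hsum v
      simp only [Pi.add_apply, Pi.zero_apply] at hv
      have := hη.1 v
      have := hζ.1 v
      omega
    obtain rfl : η = fun _ => 1 := funext fun v => (hηζ v).1
    obtain rfl : ζ = fun _ => -1 := funext fun v => (hηζ v).2
    obtain rfl : b = -a := by omega
    rw [memU_const_iff] at hη hζ
    refine ⟨a, fun K hK => ?_, fun C hC h5 => ?_⟩
    · linarith [hη.1 K hK, hζ.1 K hK]
    · linarith [hη.2 C hC h5, hζ.2 C hC h5]
  · rintro ⟨a, hclique, hcycle⟩
    refine ⟨fun _ => 1, fun _ => -1, a, -a, (memU_const_iff G 1 a).mpr ⟨?_, ?_⟩,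
      (memU_const_iff G (-1) (-a)).mpr ⟨?_, ?_⟩, by ext; simp, by ring⟩
    · intro K hK; linarith [hclique K hK]
    · intro C hC h5; linarith [hcycle C hC h5]
    · intro K hK; linarith [hclique K hK]
    · intro C hC h5; linarith [hcycle C hC h5]

lemma add_one_mul_sub_one_eq_two_mul_add_one_iff {n m : ℕ} (hm : 5 ≤ m) :
    ((n : ℤ) + 1) * ((m : ℤ) - 1) = 2 * ((m : ℤ) + 1) ↔ n = 2 ∧ m = 5 := by
  constructor
  · intro h
    rcases (by omega : n ≤ 1 ∨ n = 2 ∨ 3 ≤ n) with hn | rfl | hn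
    · have : (n : ℤ) ≤ 1 := by exact_mod_cast hn
      nlinarith
    · omega
    · have : (3 : ℤ) ≤ n := by exact_mod_cast hn
      have : (5 : ℤ) ≤ m := by exact_mod_cast hm
      nlinarith
  · rintro ⟨rfl, rfl⟩
    norm_num

lemma forall_chordlessOddCycle_eq_iff [Finite V] {G : SimpleGraph V} {n : ℕ}
    (hn : ∀ K, IsMaximalClique G K → K.ncard = n) (hpos : 1 ≤ n) :
    (∀ C, IsChordlessOddCycleSet G C → 5 ≤ C.ncard →
        ((n : ℤ) + 1) * ((C.ncard : ℤ) - 1) = 2 * ((C.ncard : ℤ) + 1)) ↔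
      (n = 1 ∨
        (n = 2 ∧ ¬ ∃ C : Set V, IsChordlessOddCycleSet G C ∧ 7 ≤ C.ncard) ∨
        (3 ≤ n ∧ ¬ ∃ C : Set V, IsChordlessOddCycleSet G C ∧ 5 ≤ C.ncard)) := by
  constructor
  · intro h
    rcases (by omega : n = 1 ∨ n = 2 ∨ 3 ≤ n) with h1 | h2 | h3
    · exact Or.inl h1
    · refine Or.inr (Or.inl ⟨h2, ?_⟩)
      rintro ⟨C, hC, h7⟩
      have := ((add_one_mul_sub_one_eq_two_mul_add_one_iff (by omega)).mp (h C hC (by omega))).2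
      omega
    · refine Or.inr (Or.inr ⟨h3, ?_⟩)
      rintro ⟨C, hC, h5⟩
      have := ((add_one_mul_sub_one_eq_two_mul_add_one_iff h5).mp (h C hC h5)).1
      omega
  · rintro (rfl | ⟨rfl, hno7⟩ | ⟨h3, hno5⟩) C hC h5
    · exact absurd hC (not_isChordlessOddCycleSet_of_ncard_eq_one hn C)
    · refine (add_one_mul_sub_one_eq_two_mul_add_one_iff h5).mpr ⟨rfl, ?_⟩
      obtain ⟨k, hk⟩ := hC.odd_ncard
      by_contra hne
      exact hno7 ⟨C, hC, by omega⟩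
    · exact absurd ⟨C, hC, h5⟩ hno5

/-- existence of `(η, a) ∈ U^(1)` and `(ζ, b) ∈ U^(-1)` with
`η + ζ = 0`, `a + b = 0` is equivalent to all maximal cliques having the same
size `n` with `n = 1`, or `n = 2` and no chordless odd cycle of length ≥ 7, or
`n ≥ 3` and no chordless odd cycle of length ≥ 5. -/
theorem stmt4 {V : Type*} [Fintype V] [Nonempty V] (G : SimpleGraph V) :
    (∃ (η ζ : V → ℤ) (a b : ℤ),
        memU G 1 η a ∧ memU G (-1) ζ b ∧ η + ζ = 0 ∧ a + b = 0) ↔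
      (∃ n : ℕ, (∀ K : Set V, IsMaximalClique G K → K.ncard = n) ∧
        (n = 1 ∨
         (n = 2 ∧ ¬ ∃ C : Set V, IsChordlessOddCycleSet G C ∧ 7 ≤ C.ncard) ∨
         (3 ≤ n ∧ ¬ ∃ C : Set V, IsChordlessOddCycleSet G C ∧ 5 ≤ C.ncard))) := by
  rw [exists_memU_one_memU_neg_one_iff]
  constructor
  · rintro ⟨a, hK, hC⟩
    obtain ⟨v⟩ := ‹Nonempty V›
    obtain ⟨K₀, hK₀, hvK₀⟩ := exists_isMaximalClique_superset (G.isClique_singleton v)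
    have hpos : 0 < K₀.ncard := (Set.ncard_pos).mpr ⟨v, hvK₀ rfl⟩
    obtain rfl : (K₀.ncard : ℤ) + 1 = a := hK K₀ hK₀
    have hn : ∀ K, IsMaximalClique G K → K.ncard = K₀.ncard := fun K hK' => by
      have := hK K hK'
      omega
    exact ⟨K₀.ncard, hn, (forall_chordlessOddCycle_eq_iff hn hpos).mp hC⟩
  · rintro ⟨n, hn, hcase⟩
    refine ⟨n + 1, fun K hK => by rw [hn K hK], ?_⟩
    exact (forall_chordlessOddCycle_eq_iff hn (by omega)).mpr hcase
end

section
/- Let G = (V, E) be a finite simple graph with V nonempty, and suppose (η, a) ∈ U^(1), (ζ, b) ∈ U^(−1), η + ζ = 0 and a + b = 0. Then η(v) = 1 and ζ(v) = −1 for every v ∈ V, all maximal cliques of G have the same size n, and a = n + 1, b = −(n + 1). -/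
variable {V : Type*}

/-- if `(η, a) ∈ U^(1)`, `(ζ, b) ∈ U^(-1)`, `η + ζ = 0` and
`a + b = 0`, then `η ≡ 1`, `ζ ≡ -1`, all maximal cliques have a common size `n`,
and `a = n + 1`, `b = -(n + 1)`. -/
theorem stmt6 {V : Type*} [Fintype V] [Nonempty V] (G : SimpleGraph V)
    (η ζ : V → ℤ) (a b : ℤ)
    (hη : memU G 1 η a) (hζ : memU G (-1) ζ b)
    (hsum : η + ζ = 0) (hab : a + b = 0) :
    (∀ v : V, η v = 1 ∧ ζ v = -1) ∧
    ∃ n : ℕ, (∀ K : Set V, IsMaximalClique G K → K.ncard = n) ∧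
      a = (n : ℤ) + 1 ∧ b = -((n : ℤ) + 1) := by
  classical
  obtain ⟨hη1, hηK, -⟩ := hη
  obtain ⟨hζ1, hζK, -⟩ := hζ
  have hζη : ∀ v, ζ v = -η v := by
    intro v
    have := congrFun hsum v
    simp only [Pi.add_apply, Pi.zero_apply] at this
    omega
  have hη_eq : ∀ v, η v = 1 := by
    intro v
    have h1 := hη1 v
    have h2 := hζ1 v
    have h3 := hζη v
    omega
  have hsumη : ∀ K : Set V, (∑ᶠ v ∈ K, η v) = (K.ncard : ℤ) := by
    intro K
    rw [← Set.coe_toFinset K, finsum_mem_coe_finset]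
    simp [hη_eq, Set.ncard_eq_toFinset_card']
  have hsumζ : ∀ K : Set V, (∑ᶠ v ∈ K, ζ v) = -(K.ncard : ℤ) := by
    intro K
    rw [← Set.coe_toFinset K, finsum_mem_coe_finset]
    simp [hζη, hη_eq, Set.ncard_eq_toFinset_card']
  have hcard : ∀ K : Set V, IsMaximalClique G K → (K.ncard : ℤ) = a - 1 := by
    intro K hK
    have h1 := hηK K hK
    have h2 := hζK K hK
    rw [hsumη] at h1
    rw [hsumζ] at h2
    omega
  -- existence of a maximal clique
  obtain ⟨v⟩ := (inferInstance : Nonempty V)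
  have hex : ∃ K : Set V, IsMaximalClique G K := by
    set T : Finset (Finset V) :=
      Finset.univ.filter (fun s => G.IsClique (↑s : Set V)) with hTdef
    have hT : ({v} : Finset V) ∈ T := by
      simp [hTdef, SimpleGraph.isClique_singleton]
    obtain ⟨s, hs, hmax⟩ := T.exists_max_image Finset.card ⟨_, hT⟩
    have hsclique : G.IsClique (↑s : Set V) := by
      simpa [hTdef] using hs
    refine ⟨↑s, hsclique, ?_⟩
    intro K' hK' hsub
    have hfin : K'.Finite := Set.toFinite K'
    have h1 : s ⊆ hfin.toFinset := by
      intro x hx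
      rw [Set.Finite.mem_toFinset]
      exact hsub hx
    have hmem : hfin.toFinset ∈ T := by
      simp only [hTdef, Finset.mem_filter, Finset.mem_univ, true_and]
      rwa [Set.Finite.coe_toFinset]
    have h2 : hfin.toFinset.card ≤ s.card := hmax _ hmem
    have := Finset.eq_of_subset_of_card_le h1 h2
    rw [this, Set.Finite.coe_toFinset]
  obtain ⟨K0, hK0⟩ := hex
  refine ⟨fun v => ⟨hη_eq v, by rw [hζη, hη_eq]⟩, K0.ncard, ?_, ?_, ?_⟩
  · intro K hK
    have h1 := hcard K hK
    have h2 := hcard K0 hK0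
    omega
  · have := hcard K0 hK0
    omega
  · have := hcard K0 hK0
    omega
end

section
/- Let G = (V, E) be a finite simple graph and let 𝒦 be the set of cliques of G of size at most 3. Then TSTAB(G) equals the set of f ∈ ℝ^V such that f(x) ≥ 0 for every x ∈ V, f⁺(K) ≤ 1 for every maximal element K of 𝒦 (with respect to inclusion), and f⁺(C) ≤ (|C|−1)/2 for every chordless odd cycle C of G of length at least 5. -/
variable {V : Type*}

/-!
Cliques with at most three vertices are vertices, edges and triangles, and a triangle is an
odd cycle, so TSTAB(G) satisfies the listed inequalities. Conversely, every such clique lies in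
a maximal one, which yields the vertex and edge inequalities and, with the chordless cycles of
length at least 5, the inequalities of all chordless odd cycles. The odd cycle inequality is
then proved for every odd closed walk, by induction on its length: unless the walk is a
chordless cycle, a repeated vertex or a chord cuts it into a shorter odd closed walk and a path
with an even number of vertices, and along that path the vertices pair off into edges.
-/

open Finset Function

theorem ZMod.sum_val_eq_sum_range {M : Type*} [AddCommMonoid M] {m : ℕ} [NeZero m]
    (g : ℕ → M) : ∑ x : ZMod m, g x.val = ∑ i ∈ range m, g i :=
  sum_nbij' ZMod.val (Nat.cast : ℕ → ZMod m) (fun x _ => mem_range.2 x.val_lt)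
    (fun _ _ => mem_univ _) (fun x _ => ZMod.natCast_zmod_val x)
    (fun _ hi => ZMod.val_cast_of_lt (mem_range.1 hi)) (fun _ _ => rfl)

theorem ZMod.sum_eq_sum_range {M : Type*} [AddCommMonoid M] {m : ℕ} [NeZero m]
    (g : ZMod m → M) : ∑ x, g x = ∑ i ∈ range m, g i := by
  simpa only [ZMod.natCast_zmod_val] using ZMod.sum_val_eq_sum_range (m := m) fun i : ℕ => g i

theorem Function.Periodic.sum_range_add {M : Type*} [AddCommMonoid M] {g : ℕ → M} {m : ℕ}
    (hg : Periodic g m) (s : ℕ) : ∑ i ∈ range m, g (s + i) = ∑ i ∈ range m, g i := by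
  induction s with
  | zero => simp
  | succ s ih =>
    rw [← ih]
    cases m with
    | zero => simp
    | succ n =>
      have hwrap : g (s + 1 + n) = g s := by rw [add_right_comm]; exact hg s
      rw [sum_range_succ, sum_range_succ', add_zero, hwrap]
      simp only [add_assoc, add_comm 1]

theorem finsum_mem_le_finsum_mem_of_subset {α M : Type*} [AddCommMonoid M] [PartialOrder M]
    [IsOrderedAddMonoid M] {g : α → M} {s t : Set α} (hg : ∀ x ∈ t, 0 ≤ g x)
    (hst : s ⊆ t) (ht : t.Finite) : ∑ᶠ x ∈ s, g x ≤ ∑ᶠ x ∈ t, g x := by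
  rw [← finsum_mem_add_sdiff hst ht]
  exact le_add_of_nonneg_right (finsum_nonneg fun x => finsum_nonneg fun hx => hg x hx.1)

section StablePolytope

variable {G : SimpleGraph V} {f : V → ℝ}

theorem IsChordlessOddCycleSet.isOddCycleSet {C : Set V} (hC : IsChordlessOddCycleSet G C) :
    IsOddCycleSet G C :=
  let ⟨m, c, hm, hodd, hinj, hadj, _, hC⟩ := hC
  ⟨m, c, hm, hodd, hinj, hadj, hC⟩

theorem isOddCycleSet_triangle {a b c : V} (hab : G.Adj a b) (hbc : G.Adj b c)
    (hca : G.Adj c a) : IsOddCycleSet G {a, b, c} := by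
  refine ⟨3, ![a, b, c], le_rfl, by decide, ?_, ?_, ?_⟩
  · intro i j h
    fin_cases i <;> fin_cases j <;>
      first | rfl | simp_all [hab.ne, hbc.ne, hca.ne, hab.ne.symm, hbc.ne.symm, hca.ne.symm]
  · intro i
    fin_cases i
    exacts [hab, hbc, hca]
  · show _ = Set.range (![a, b, c] : Fin 3 → V)
    rw [Matrix.range_cons, Matrix.range_cons, Matrix.range_cons_empty, Set.singleton_union,
      Set.singleton_union]

theorem memTSTAB.finsum_le_one_of_isClique (hf : memTSTAB G f) {K : Set V}
    (hK : G.IsClique K) (hKfin : K.Finite) (hK3 : K.ncard ≤ 3) : ∑ᶠ v ∈ K, f v ≤ 1 := by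
  obtain ⟨hf01, hedge, hodd⟩ := hf
  interval_cases hn : K.ncard
  · rw [(Set.ncard_eq_zero hKfin).1 hn, finsum_mem_empty]
    exact zero_le_one
  · obtain ⟨a, rfl⟩ := Set.ncard_eq_one.1 hn
    rw [finsum_mem_singleton]
    exact (hf01 a).2
  · obtain ⟨a, b, hab, rfl⟩ := Set.ncard_eq_two.1 hn
    rw [finsum_mem_pair hab]
    exact hedge a b (hK (by simp) (by simp) hab)
  · obtain ⟨a, b, c, hab, hac, hbc, rfl⟩ := Set.ncard_eq_three.1 hn
    have htri := hodd _ <| isOddCycleSet_triangle (hK (by simp) (by simp) hab)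
      (hK (by simp) (by simp) hbc) (hK (by simp) (by simp) hac.symm)
    have hsum : ∑ᶠ v ∈ ({a, b, c} : Set V), f v = f a + (f b + f c) := by
      rw [finsum_mem_insert _ (by simp [hab, hac]) (Set.toFinite _), finsum_mem_pair hbc]
    rw [hn, hsum] at htri
    rw [hsum]
    linarith

theorem finsum_le_one_of_isClique_of_maximal [Finite V] (h0 : ∀ x, 0 ≤ f x)
    (hmax : ∀ K : Set V, (G.IsClique K ∧ K.ncard ≤ 3) →
      (∀ K' : Set V, G.IsClique K' ∧ K'.ncard ≤ 3 → K ⊆ K' → K = K') →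
      ∑ᶠ v ∈ K, f v ≤ 1)
    {K : Set V} (hK : G.IsClique K) (hK3 : K.ncard ≤ 3) : ∑ᶠ v ∈ K, f v ≤ 1 := by
  obtain ⟨L, hKL, hL⟩ := Set.toFinite {L : Set V | G.IsClique L ∧ L.ncard ≤ 3}
    |>.exists_le_maximal (a := K) ⟨hK, hK3⟩
  calc ∑ᶠ v ∈ K, f v ≤ ∑ᶠ v ∈ L, f v :=
        finsum_mem_le_finsum_mem_of_subset (fun x _ => h0 x) hKL L.toFinite
    _ ≤ 1 := hmax L hL.1 fun L' hL' hLL' => le_antisymm hLL' (hL.2 hL' hLL')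

theorem sum_range_two_mul_le (hedge : ∀ x y, G.Adj x y → f x + f y ≤ 1) {w : ℕ → V}
    (hw : ∀ i, G.Adj (w i) (w (i + 1))) (t : ℕ) : ∑ i ∈ range (2 * t), f (w i) ≤ t := by
  induction t with
  | zero => simp
  | succ t ih =>
    rw [show 2 * (t + 1) = 2 * t + 1 + 1 by ring, sum_range_succ, sum_range_succ]
    push_cast
    linarith [hedge _ _ (hw (2 * t))]

def IsClosedWalk (G : SimpleGraph V) (m : ℕ) (w : ℕ → V) : Prop :=
  Periodic w m ∧ ∀ i, G.Adj (w i) (w (i + 1))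

/-- From `w s` the walk reaches a neighbour of `w s` in an even number `q` of steps, so
`w s, …, w (s + q)` is an odd closed walk of length `q + 1 < m`. -/
def HasOddShortcut (G : SimpleGraph V) (m : ℕ) (w : ℕ → V) : Prop :=
  ∃ s q, Even q ∧ q + 1 < m ∧ G.Adj (w (s + q)) (w s)

theorem isClosedWalk_natCast {m : ℕ} {c : ZMod m → V} (hc : ∀ i, G.Adj (c i) (c (i + 1))) :
    IsClosedWalk G m fun i : ℕ => c i :=
  ⟨fun i => by simp, fun i => by simpa using hc i⟩

theorem isClosedWalk_mod {w : ℕ → V} (hw : ∀ i, G.Adj (w i) (w (i + 1))) {q : ℕ}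
    (hq : G.Adj (w q) (w 0)) : IsClosedWalk G (q + 1) fun i => w (i % (q + 1)) := by
  refine ⟨fun i => by simp, fun i => ?_⟩
  show G.Adj (w (i % (q + 1))) (w ((i + 1) % (q + 1)))
  rcases (Nat.lt_add_one_iff.1 (Nat.mod_lt i (Nat.succ_pos q))).lt_or_eq with hi | hi
  · rw [Nat.add_mod_of_add_mod_lt] <;> rw [Nat.one_mod_eq_one.2 (by omega)]
    · exact hw _
    · omega
  · rw [Nat.succ_mod_succ_eq_zero_iff.2 hi, hi]
    exact hq

namespace IsClosedWalk

variable {m : ℕ} {w : ℕ → V}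

theorem ne_one (hw : IsClosedWalk G m w) : m ≠ 1 := by
  rintro rfl
  exact (hw.2 0).ne (hw.1 0).symm

theorem rotate (hw : IsClosedWalk G m w) (s : ℕ) : IsClosedWalk G m fun i => w (s + i) :=
  ⟨fun i => by simp only [← add_assoc]; exact hw.1 (s + i), fun i => hw.2 (s + i)⟩

theorem hasOddShortcut_of_eq (hw : IsClosedWalk G m w) (hm : Odd m) {i j : ℕ} (hij : i < j)
    (hji : j < i + m) (h : w i = w j) : HasOddShortcut G m w := by
  obtain ⟨d, rfl⟩ : ∃ d, j = i + d := ⟨j - i, by omega⟩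
  rcases Nat.even_or_odd d with hd | hd
  · refine ⟨i + d, m - d - 1, ?_, by omega, ?_⟩
    · obtain ⟨a, rfl⟩ := hm
      obtain ⟨b, rfl⟩ := hd
      exact ⟨a - b, by omega⟩
    · have hstep := hw.2 (i + d + (m - d - 1))
      rwa [show i + d + (m - d - 1) + 1 = i + m by omega, hw.1 i, h] at hstep
  · refine ⟨i, d - 1, ?_, by omega, ?_⟩
    · obtain ⟨b, rfl⟩ := hd
      exact ⟨b, by omega⟩
    · have hstep := hw.2 (i + (d - 1))
      rwa [show i + (d - 1) + 1 = i + d by omega, ← h] at hstep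

theorem hasOddShortcut_of_adj (hw : IsClosedWalk G m w) (hm : Odd m) {i j : ℕ}
    (hij : i + 2 ≤ j) (hji : j + 2 ≤ i + m) (h : G.Adj (w i) (w j)) : HasOddShortcut G m w := by
  obtain ⟨d, rfl⟩ : ∃ d, j = i + d := ⟨j - i, by omega⟩
  rcases Nat.even_or_odd d with hd | hd
  · exact ⟨i, d, hd, by omega, h.symm⟩
  · refine ⟨i + d, m - d, ?_, by omega, ?_⟩
    · obtain ⟨a, rfl⟩ := hm
      obtain ⟨b, rfl⟩ := hd
      exact ⟨a - b, by omega⟩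
    · rwa [show i + d + (m - d) = i + m by omega, hw.1 i]

theorem injective_of_not_hasOddShortcut (hw : IsClosedWalk G m w) (hm : Odd m)
    (hs : ¬ HasOddShortcut G m w) : Injective fun x : ZMod m => w x.val := by
  have : NeZero m := ⟨hm.pos.ne'⟩
  have key : ∀ x y : ZMod m, x.val < y.val → w x.val ≠ w y.val := fun x y hxy h =>
    hs (hw.hasOddShortcut_of_eq hm hxy (by have := y.val_lt; omega) h)
  intro x y h
  rcases lt_trichotomy x.val y.val with hxy | hxy | hxy
  · exact absurd h (key x y hxy)
  · exact ZMod.val_injective m hxy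
  · exact absurd h.symm (key y x hxy)

theorem isChordlessOddCycleSet_of_not_hasOddShortcut (hw : IsClosedWalk G m w) (hm : Odd m)
    (hs : ¬ HasOddShortcut G m w) :
    IsChordlessOddCycleSet G (Set.range fun x : ZMod m => w x.val) := by
  have : NeZero m := ⟨hm.pos.ne'⟩
  have key : ∀ x y : ZMod m, x.val < y.val → G.Adj (w x.val) (w y.val) →
      y = x + 1 ∨ x = y + 1 := by
    intro x y hxy h
    have hy := y.val_lt
    by_cases h1 : y.val = x.val + 1
    · left
      rw [← ZMod.natCast_zmod_val y, h1, Nat.cast_succ, ZMod.natCast_zmod_val]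
    by_cases h2 : x.val = 0 ∧ y.val + 1 = m
    · right
      rw [← ZMod.natCast_zmod_val x, ← ZMod.natCast_zmod_val y, h2.1, ← Nat.cast_add_one,
        h2.2, ZMod.natCast_self, Nat.cast_zero]
    exact absurd (hw.hasOddShortcut_of_adj hm (by omega) (by omega) h) hs
  refine ⟨m, _, ?_, hm, hw.injective_of_not_hasOddShortcut hm hs, fun x => ?_,
    fun x y h => ?_, rfl⟩
  · have := hw.ne_one
    obtain ⟨a, rfl⟩ := hm
    omega
  · have hsucc : w (x + 1).val = w (x.val + 1) := by
      rw [← ZMod.natCast_zmod_val x, ← Nat.cast_add_one, ZMod.val_natCast, hw.1.map_mod_nat,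
        ZMod.val_natCast, Nat.mod_eq_of_lt x.val_lt]
    exact hsucc ▸ hw.2 x.val
  · rcases lt_trichotomy x.val y.val with hxy | hxy | hxy
    · exact key x y hxy h
    · exact absurd (congrArg w hxy) h.ne
    · exact (key y x hxy h.symm).symm

theorem sum_range_le (hedge : ∀ x y, G.Adj x y → f x + f y ≤ 1)
    (hcyc : ∀ C, IsChordlessOddCycleSet G C → ∑ᶠ v ∈ C, f v ≤ ((C.ncard : ℝ) - 1) / 2)
    (hw : IsClosedWalk G m w) (hm : Odd m) :
    ∑ i ∈ range m, f (w i) ≤ ((m : ℝ) - 1) / 2 := by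
  induction m using Nat.strong_induction_on generalizing w with
  | _ m ih =>
  by_cases hs : HasOddShortcut G m w
  · obtain ⟨s, q, hq, hqm, hadj⟩ := hs
    have hsub : ∑ i ∈ range (q + 1), f (w (s + i)) ≤ (((q + 1 : ℕ) : ℝ) - 1) / 2 := by
      refine (sum_congr rfl fun i hi => ?_).trans_le
        (ih (q + 1) hqm (isClosedWalk_mod (hw.rotate s).2 hadj) hq.add_one)
      rw [Nat.mod_eq_of_lt (mem_range.1 hi)]
    obtain ⟨t, rfl⟩ : ∃ t, m = q + 1 + 2 * t := by
      obtain ⟨a, rfl⟩ := hm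
      obtain ⟨b, rfl⟩ := hq
      exact ⟨a - b, by omega⟩
    calc ∑ i ∈ range (q + 1 + 2 * t), f (w i)
        = ∑ i ∈ range (q + 1 + 2 * t), f (w (s + i)) := ((hw.1.comp f).sum_range_add s).symm
      _ = ∑ i ∈ range (q + 1), f (w (s + i))
            + ∑ i ∈ range (2 * t), f (w (s + (q + 1 + i))) := by
        rw [sum_range_add]
      _ ≤ (((q + 1 : ℕ) : ℝ) - 1) / 2 + t :=
        add_le_add hsub (sum_range_two_mul_le hedge (fun i => hw.2 (s + (q + 1 + i))) t)
      _ = _ := by push_cast; ring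
  · have : NeZero m := ⟨hm.pos.ne'⟩
    have hinj := hw.injective_of_not_hasOddShortcut hm hs
    have hchordless := hcyc _ (hw.isChordlessOddCycleSet_of_not_hasOddShortcut hm hs)
    rwa [finsum_mem_range hinj, finsum_eq_sum_of_fintype,
      ZMod.sum_val_eq_sum_range fun i => f (w i), Set.ncard_range_of_injective hinj,
      Nat.card_zmod] at hchordless

end IsClosedWalk

theorem finsum_mem_le_of_isChordlessOddCycleSet
    (hclique : ∀ K : Set V, G.IsClique K → K.ncard ≤ 3 → ∑ᶠ v ∈ K, f v ≤ 1)
    (hlong : ∀ C : Set V, IsChordlessOddCycleSet G C → 5 ≤ C.ncard →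
      ∑ᶠ v ∈ C, f v ≤ ((C.ncard : ℝ) - 1) / 2)
    {C : Set V} (hC : IsChordlessOddCycleSet G C) :
    ∑ᶠ v ∈ C, f v ≤ ((C.ncard : ℝ) - 1) / 2 := by
  by_cases h5 : 5 ≤ C.ncard
  · exact hlong C hC h5
  obtain ⟨m, c, hm3, hm, hinj, hadj, -, rfl⟩ := hC
  have hcard := Set.ncard_range_of_injective hinj
  rw [Nat.card_zmod] at hcard
  obtain rfl : m = 3 := by
    obtain ⟨a, rfl⟩ := hm
    omega
  have htri : G.IsClique (Set.range c) := by
    rintro _ ⟨i, rfl⟩ _ ⟨j, rfl⟩ hne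
    have hconsec : ∀ i j : ZMod 3, i ≠ j → j = i + 1 ∨ i = j + 1 := by decide
    rcases hconsec i j (fun h => hne (h ▸ rfl)) with rfl | rfl
    exacts [hadj i, (hadj j).symm]
  rw [hcard]
  linarith [hclique _ htri hcard.le]

theorem finsum_mem_le_of_isOddCycleSet (hedge : ∀ x y, G.Adj x y → f x + f y ≤ 1)
    (hcyc : ∀ C, IsChordlessOddCycleSet G C → ∑ᶠ v ∈ C, f v ≤ ((C.ncard : ℝ) - 1) / 2)
    {C : Set V} (hC : IsOddCycleSet G C) : ∑ᶠ v ∈ C, f v ≤ ((C.ncard : ℝ) - 1) / 2 := by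
  obtain ⟨m, c, -, hm, hinj, hadj, rfl⟩ := hC
  have : NeZero m := ⟨hm.pos.ne'⟩
  rw [finsum_mem_range hinj, finsum_eq_sum_of_fintype, ZMod.sum_eq_sum_range,
    Set.ncard_range_of_injective hinj, Nat.card_zmod]
  exact (isClosedWalk_natCast hadj).sum_range_le hedge hcyc hm

theorem memTSTAB_of_forall_isClique (h0 : ∀ x, 0 ≤ f x)
    (hclique : ∀ K : Set V, G.IsClique K → K.ncard ≤ 3 → ∑ᶠ v ∈ K, f v ≤ 1)
    (hlong : ∀ C : Set V, IsChordlessOddCycleSet G C → 5 ≤ C.ncard →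
      ∑ᶠ v ∈ C, f v ≤ ((C.ncard : ℝ) - 1) / 2) :
    memTSTAB G f := by
  have hedge : ∀ x y, G.Adj x y → f x + f y ≤ 1 := fun x y hxy => by
    have hpair := hclique {x, y} (SimpleGraph.isClique_pair.2 fun _ => hxy)
      (by rw [Set.ncard_pair hxy.ne]; norm_num)
    rwa [finsum_mem_pair hxy.ne] at hpair
  refine ⟨fun x => ⟨h0 x, ?_⟩, hedge, fun C hC => finsum_mem_le_of_isOddCycleSet hedge
    (fun C' hC' => finsum_mem_le_of_isChordlessOddCycleSet hclique hlong hC') hC⟩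
  simpa using hclique {x} (Set.pairwise_singleton x G.Adj) (by simp)

end StablePolytope

/-- TSTAB(G) is cut out by nonnegativity, the inequalities for
maximal elements of the set of cliques of size at most 3, and the inequalities
for chordless odd cycles of length at least 5. -/
theorem stmt10 {V : Type*} [Fintype V] (G : SimpleGraph V) (f : V → ℝ) :
    memTSTAB G f ↔
      ((∀ x, 0 ≤ f x) ∧
       (∀ K : Set V, (G.IsClique K ∧ K.ncard ≤ 3) →
          (∀ K' : Set V, G.IsClique K' ∧ K'.ncard ≤ 3 → K ⊆ K' → K = K') →
          (∑ᶠ v ∈ K, f v) ≤ 1) ∧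
       (∀ C : Set V, IsChordlessOddCycleSet G C → 5 ≤ C.ncard →
          (∑ᶠ v ∈ C, f v) ≤ ((C.ncard : ℝ) - 1) / 2)) := by
  refine ⟨fun hf => ⟨fun x => (hf.1 x).1, ?_, fun C hC _ => hf.2.2 C hC.isOddCycleSet⟩, ?_⟩
  · exact fun K hK _ => hf.finsum_le_one_of_isClique hK.1 K.toFinite hK.2
  · rintro ⟨h0, hmax, hlong⟩
    exact memTSTAB_of_forall_isClique h0
      (fun K hK hK3 => finsum_le_one_of_isClique_of_maximal h0 hmax hK hK3) hlong
end

section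
/- Let G be the graph on the 21 vertices {x_i, y_i, z_i : i ∈ ℤ/7ℤ} with edges {x_i, x_{i+1}}, {x_i, y_i}, {y_i, z_i}, {z_i, y_{i+1}}, {z_i, z_{i+3}} (indices modulo 7), and set X = {x_i}, Y = {y_i}, Z = {z_i}. Then every cycle of G of length 5 contains at least one vertex of X and at least one vertex of Z; consequently, every 5-cycle of G contains at least two vertices of Y. -/
/-!
The map `x_i ↦ i`, `y_i ↦ i + 1` is a homomorphism from `G[X ∪ Y]` to the 7-cycle `ℤ/7ℤ`, and so
is `y_i ↦ 2i - 1`, `z_i ↦ 2i` from `G[Y ∪ Z]`. A graph with a homomorphism to the 7-cycle has no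
odd cycle shorter than 7, so every 5-cycle meets both `X` and `Z`. As no edge joins `X` and `Z`,
such a cycle leaves `X` through a vertex of `Y` and leaves `Z` through another one.
-/

variable {V : Type*}

/-- The 21 vertices `x_i, y_i, z_i`, `i ∈ ℤ/7ℤ`. -/
inductive Vtx : Type
  | x : ZMod 7 → Vtx
  | y : ZMod 7 → Vtx
  | z : ZMod 7 → Vtx
  deriving DecidableEq, Fintype

/-- The oriented edge relation of the example graph. -/
def paperRel : Vtx → Vtx → Prop := fun u v =>
  (∃ i, u = Vtx.x i ∧ v = Vtx.x (i + 1)) ∨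
  (∃ i, u = Vtx.x i ∧ v = Vtx.y i) ∨
  (∃ i, u = Vtx.y i ∧ v = Vtx.z i) ∨
  (∃ i, u = Vtx.z i ∧ v = Vtx.y (i + 1)) ∨
  (∃ i, u = Vtx.z i ∧ v = Vtx.z (i + 3))

instance : DecidableRel paperRel := fun u v => by
  unfold paperRel; infer_instance

/-- The example graph of the paper. -/
def paperGraph : SimpleGraph Vtx where
  Adj u v := paperRel u v ∨ paperRel v u
  symm := ⟨fun _ _ h => Or.symm h⟩
  loopless := ⟨by
    show ∀ a, ¬(paperRel a a ∨ paperRel a a)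
    decide⟩

/-- The set `X = {x_i}`. -/
def Xset : Set Vtx := Set.range Vtx.x
/-- The set `Y = {y_i}`. -/
def Yset : Set Vtx := Set.range Vtx.y
/-- The set `Z = {z_i}`. -/
def Zset : Set Vtx := Set.range Vtx.z

theorem ZMod.exists_and_not_add_one {m : ℕ} [NeZero m] {P : ZMod m → Prop} {i j : ZMod m}
    (hi : P i) (hj : ¬ P j) : ∃ k, P k ∧ ¬ P (k + 1) := by
  by_contra! hclosed
  have hall : ∀ t : ℕ, P (i + t) := by
    intro t
    induction t with
    | zero => simpa using hi
    | succ t ih => simpa [add_assoc] using hclosed _ ih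
  exact hj (by simpa using hall (j - i).val)

/-- The `m` steps lift to signs whose sum is divisible by `n`; that sum has the parity of `m`
and absolute value at most `m`, so for `m < n` it would be an odd zero. -/
theorem le_of_odd_closed_unit_walk {m n : ℕ} (hm : Odd m) (f : ZMod m → ZMod n)
    (hf : ∀ i, f (i + 1) - f i = 1 ∨ f (i + 1) - f i = -1) : n ≤ m := by
  have : NeZero m := ⟨hm.pos.ne'⟩
  by_contra! hmn
  have hsign : ∀ i, ∃ e : ℤ, (e = 1 ∨ e = -1) ∧ (e : ZMod n) = f (i + 1) - f i := by
    intro i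
    rcases hf i with h | h
    · exact ⟨1, .inl rfl, by simp [h]⟩
    · exact ⟨-1, .inr rfl, by simp [h]⟩
  choose ε hε hεf using hsign
  have hdvd : (n : ℤ) ∣ ∑ i, ε i := by
    rw [← ZMod.intCast_zmod_eq_zero_iff_dvd]
    push_cast [hεf]
    rw [Finset.sum_sub_distrib, sub_eq_zero]
    exact Fintype.sum_equiv (Equiv.addRight 1) _ _ fun _ => rfl
  have habs : |∑ i, ε i| < n := by
    calc |∑ i, ε i| ≤ ∑ i, |ε i| := Finset.abs_sum_le_sum_abs _ _
      _ = m := by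
        rw [Finset.sum_congr rfl fun i _ => show |ε i| = 1 by rcases hε i with h | h <;> simp [h]]
        simp
      _ < n := by exact_mod_cast hmn
  have hparity : ((∑ i, ε i : ℤ) : ZMod 2) = m := by
    push_cast
    rw [Finset.sum_congr rfl fun i _ => show (ε i : ZMod 2) = 1 by
      rcases hε i with h | h <;> simp [h]]
    simp
  rw [Int.eq_zero_of_abs_lt_dvd hdvd habs, Int.cast_zero, eq_comm,
    ZMod.natCast_eq_zero_iff_even] at hparity
  exact Nat.not_even_iff_odd.mpr hm hparity

theorem SimpleGraph.le_length_of_odd_cycle_of_unit_potential {G : SimpleGraph V}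
    {S : Set V} {n : ℕ} (φ : V → ZMod n)
    (hφ : ∀ u ∈ S, ∀ v ∈ S, G.Adj u v → φ v - φ u = 1 ∨ φ v - φ u = -1)
    {m : ℕ} (hm : Odd m) {c : ZMod m → V} (hadj : ∀ i, G.Adj (c i) (c (i + 1)))
    (hS : ∀ i, c i ∈ S) : n ≤ m :=
  le_of_odd_closed_unit_walk hm (φ ∘ c) fun i => hφ _ (hS i) _ (hS (i + 1)) (hadj i)

theorem SimpleGraph.two_le_ncard_range_diff_of_not_adj {G : SimpleGraph V}
    {A B : Set V} (hAB : Disjoint A B) (hnadj : ∀ u ∈ A, ∀ v ∈ B, ¬ G.Adj u v)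
    {m : ℕ} [NeZero m] {c : ZMod m → V} (hc : Function.Injective c)
    (hadj : ∀ i, G.Adj (c i) (c (i + 1))) {i j : ZMod m} (hi : c i ∈ A) (hj : c j ∈ B) :
    2 ≤ (Set.range c \ (A ∪ B)).ncard := by
  obtain ⟨k, hkA, hk⟩ := ZMod.exists_and_not_add_one (P := (c · ∈ A)) hi
    (Set.disjoint_right.mp hAB hj)
  obtain ⟨l, hlB, hl⟩ := ZMod.exists_and_not_add_one (P := (c · ∈ B)) hj
    (Set.disjoint_left.mp hAB hi)
  have hkl : c (k + 1) ≠ c (l + 1) := fun h =>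
    Set.disjoint_left.mp hAB hkA (add_right_cancel (hc h) ▸ hlB)
  have hsub : {c (k + 1), c (l + 1)} ⊆ Set.range c \ (A ∪ B) := by
    rintro _ (rfl | rfl)
    · exact ⟨⟨_, rfl⟩, by rintro (h | h); exacts [hk h, hnadj _ hkA _ h (hadj k)]⟩
    · exact ⟨⟨_, rfl⟩, by rintro (h | h); exacts [hnadj _ h _ hlB (hadj l).symm, hl h]⟩
  exact (Set.ncard_pair hkl).symm.le.trans (Set.ncard_le_ncard hsub (Set.finite_range c).sdiff)

instance : DecidableRel paperGraph.Adj := fun u v =>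
  inferInstanceAs (Decidable (paperRel u v ∨ paperRel v u))

def xyPotential : Vtx → ZMod 7
  | .x i => i
  | .y i => i + 1
  | .z _ => 0

def yzPotential : Vtx → ZMod 7
  | .x _ => 0
  | .y i => 2 * i - 1
  | .z i => 2 * i

theorem xyPotential_sub_of_adj : ∀ u ∈ Zsetᶜ, ∀ v ∈ Zsetᶜ, paperGraph.Adj u v →
    xyPotential v - xyPotential u = 1 ∨ xyPotential v - xyPotential u = -1 := by
  simp only [Zset, Set.mem_compl_iff, Set.mem_range]
  decide

theorem yzPotential_sub_of_adj : ∀ u ∈ Xsetᶜ, ∀ v ∈ Xsetᶜ, paperGraph.Adj u v →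
    yzPotential v - yzPotential u = 1 ∨ yzPotential v - yzPotential u = -1 := by
  simp only [Xset, Set.mem_compl_iff, Set.mem_range]
  decide

theorem disjoint_Xset_Zset : Disjoint Xset Zset := by
  rw [Set.disjoint_left]
  rintro _ ⟨i, rfl⟩ ⟨j, hj⟩
  cases hj

theorem not_adj_of_mem_Xset_of_mem_Zset : ∀ u ∈ Xset, ∀ v ∈ Zset, ¬ paperGraph.Adj u v := by
  simp only [Xset, Zset, Set.mem_range]
  decide

theorem mem_Yset_of_not_mem_union : ∀ v ∉ Xset ∪ Zset, v ∈ Yset := by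
  rintro (i | i | i) hv
  exacts [(hv (.inl ⟨i, rfl⟩)).elim, ⟨i, rfl⟩, (hv (.inr ⟨i, rfl⟩)).elim]

/-- every 5-cycle of the example graph meets `X` and `Z`, and
contains at least two vertices of `Y`. -/
theorem stmt12 (C : Set Vtx) (hC : IsCycleSet paperGraph C) (h5 : C.ncard = 5) :
    (C ∩ Xset).Nonempty ∧ (C ∩ Zset).Nonempty ∧ 2 ≤ (C ∩ Yset).ncard := by
  obtain ⟨m, c, -, hinj, hadj, rfl⟩ := hC
  obtain rfl : m = 5 := by
    rwa [Set.ncard_range_of_injective hinj, Nat.card_zmod] at h5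
  have hX : ∃ i, c i ∈ Xset := by
    by_contra! h
    have := paperGraph.le_length_of_odd_cycle_of_unit_potential _ yzPotential_sub_of_adj
      (by decide) hadj h
    omega
  have hZ : ∃ j, c j ∈ Zset := by
    by_contra! h
    have := paperGraph.le_length_of_odd_cycle_of_unit_potential _ xyPotential_sub_of_adj
      (by decide) hadj h
    omega
  obtain ⟨i, hi⟩ := hX
  obtain ⟨j, hj⟩ := hZ
  refine ⟨⟨c i, ⟨i, rfl⟩, hi⟩, ⟨c j, ⟨j, rfl⟩, hj⟩, ?_⟩
  calc 2 ≤ (Set.range c \ (Xset ∪ Zset)).ncard :=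
        paperGraph.two_le_ncard_range_diff_of_not_adj disjoint_Xset_Zset
          not_adj_of_mem_Xset_of_mem_Zset hinj hadj hi hj
    _ ≤ (Set.range c ∩ Yset).ncard :=
        Set.ncard_le_ncard (fun v hv => ⟨hv.1, mem_Yset_of_not_mem_union v hv.2⟩)
          (Set.toFinite _)
end

section
/- Let G be the graph on the 21 vertices {x_i, y_i, z_i : i ∈ ℤ/7ℤ} with edges {x_i, x_{i+1}}, {x_i, y_i}, {y_i, z_i}, {z_i, y_{i+1}}, {z_i, z_{i+3}} (indices modulo 7), and define μ : V → ℤ by μ(x_i) = μ(z_i) = 4 and μ(y_i) = 3 for all i. Then there do not exist (μ₁, d₁) ∈ U^(1) and (μ₂, d₂) ∈ U^(1) with μ₁ + μ₂ = μ and d₁ + d₂ = 10. -/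
variable {V : Type*}

/-- The function `μ` with `μ(x_i) = μ(z_i) = 4`, `μ(y_i) = 3`. -/
def muPaper : Vtx → ℤ
  | Vtx.x _ => 4
  | Vtx.y _ => 3
  | Vtx.z _ => 4

/-!
Write X, Y, Z for the sums of `g` over the `x`-, `y`- and `z`-vertices. Every `(g, d) ∈ U^(n)`
satisfies four aggregated inequalities: the chordless 7-cycles `x₀ x₁ … x₆` and `z₀ z₃ z₆ … z₄`
give `2X ≤ 6d - 2n` and `2Z ≤ 6d - 2n`; the maximal cliques `{xᵢ, xᵢ₊₁}` summed over `i` give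
`2X ≤ 7(d - n)`; the chordless 5-cycles `xᵢ yᵢ zᵢ yᵢ₊₁ xᵢ₊₁` summed over `i` give
`2(2X + 2Y + Z) ≤ 7(4d - 2n)`.

For `μ` and `d₁ + d₂ = 10` the cycle inequalities of the two summands add up to equalities, so
each is tight. The 7-cycle and clique bounds then force `d₁ = d₂ = 5` and `X₁ = Z₁ = 14`, and the
tight 5-cycle bound leaves `4 Y₁ = 42`, which has no integer solution.
-/

theorem SimpleGraph.isMaximalClique_pair {G : SimpleGraph V} {u v : V} (huv : G.Adj u v)
    (hcommon : ∀ w, ¬ (G.Adj u w ∧ G.Adj v w)) : IsMaximalClique G {u, v} := by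
  refine ⟨(SimpleGraph.isClique_pair).2 fun _ => huv, fun K hK hsub => ?_⟩
  refine hsub.antisymm fun w hw => ?_
  by_contra hw'
  simp only [Set.mem_insert_iff, Set.mem_singleton_iff, not_or] at hw'
  exact hcommon w ⟨hK (hsub (by simp)) hw (Ne.symm hw'.1), hK (hsub (by simp)) hw (Ne.symm hw'.2)⟩

namespace memU

variable {G : SimpleGraph V} {n d : ℤ} {g : V → ℤ}

theorem add_le_of_isMaximalClique_pair (h : memU G n g d) {u v : V} (huv : u ≠ v)
    (hK : IsMaximalClique G {u, v}) : g u + g v ≤ d - n := by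
  simpa only [finsum_mem_pair huv] using h.2.1 _ hK

theorem two_mul_sum_le_of_chordless (h : memU G n g d) {m : ℕ} [NeZero m] (c : ZMod m → V)
    (hm : 5 ≤ m) (hodd : Odd m) (hinj : Function.Injective c) (hadj : ∀ i, G.Adj (c i) (c (i + 1)))
    (hchord : ∀ i j, G.Adj (c i) (c j) → j = i + 1 ∨ i = j + 1) :
    2 * ∑ i, g (c i) ≤ d * ((m : ℤ) - 1) - 2 * n := by
  have hcard : (Set.range c).ncard = m := by
    rw [← Nat.card_coe_set_eq, Nat.card_range_of_injective hinj, Nat.card_zmod]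
  have hC := h.2.2 _ ⟨m, c, by omega, hodd, hinj, hadj, hchord, rfl⟩ (hm.trans hcard.ge)
  rwa [finsum_mem_range hinj, finsum_eq_sum_of_fintype, hcard] at hC

end memU

instance inst_s14 : DecidableRel paperGraph.Adj := fun u v => by
  show Decidable (paperRel u v ∨ paperRel v u); infer_instance

namespace paperGraph

def pentagon (k : ZMod 7) : ZMod 5 → Vtx :=
  ![.x k, .y k, .z k, .y (k + 1), .x (k + 1)]

def zHeptagon (i : ZMod 7) : Vtx := .z (3 * i)

theorem pentagon_injective (k : ZMod 7) : Function.Injective (pentagon k) := by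
  revert k; decide

theorem pentagon_adj (k : ZMod 7) (i : ZMod 5) :
    paperGraph.Adj (pentagon k i) (pentagon k (i + 1)) := by
  revert k i; decide

theorem pentagon_chordless (k : ZMod 7) (i j : ZMod 5) :
    paperGraph.Adj (pentagon k i) (pentagon k j) → j = i + 1 ∨ i = j + 1 := by
  revert k i j; decide

theorem zHeptagon_injective : Function.Injective zHeptagon := by decide

theorem zHeptagon_adj (i : ZMod 7) : paperGraph.Adj (zHeptagon i) (zHeptagon (i + 1)) := by
  revert i; decide

theorem zHeptagon_chordless (i j : ZMod 7) :
    paperGraph.Adj (zHeptagon i) (zHeptagon j) → j = i + 1 ∨ i = j + 1 := by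
  revert i j; decide

theorem x_injective : Function.Injective Vtx.x := by decide

theorem x_adj (i : ZMod 7) : paperGraph.Adj (.x i) (.x (i + 1)) := by
  revert i; decide

theorem x_chordless (i j : ZMod 7) : paperGraph.Adj (.x i) (.x j) → j = i + 1 ∨ i = j + 1 := by
  revert i j; decide

theorem x_no_common_neighbor (i : ZMod 7) (w : Vtx) :
    ¬ (paperGraph.Adj (.x i) w ∧ paperGraph.Adj (.x (i + 1)) w) := by
  revert i w; decide

end paperGraph

open paperGraph

theorem sum_comp_add_right {G M : Type*} [AddGroup G] [Fintype G] [AddCommMonoid M] (f : G → M)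
    (a : G) : ∑ i, f (i + a) = ∑ i, f i :=
  Equiv.sum_comp (Equiv.addRight a) f

namespace memU

variable {n d : ℤ} {g : Vtx → ℤ}

theorem two_mul_sum_x_le (h : memU paperGraph n g d) : 2 * ∑ i, g (.x i) ≤ 6 * d - 2 * n := by
  have := h.two_mul_sum_le_of_chordless Vtx.x (by norm_num) (by decide) x_injective x_adj
    x_chordless
  push_cast at this
  linarith

theorem two_mul_sum_z_le (h : memU paperGraph n g d) : 2 * ∑ i, g (.z i) ≤ 6 * d - 2 * n := by
  have := h.two_mul_sum_le_of_chordless zHeptagon (by norm_num) (by decide) zHeptagon_injective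
    zHeptagon_adj zHeptagon_chordless
  have hperm : ∑ i, g (zHeptagon i) = ∑ i, g (.z i) :=
    Fintype.sum_bijective (3 * ·) (by decide) _ _ fun _ => rfl
  push_cast at this
  linarith

theorem two_mul_sum_x_le_of_edges (h : memU paperGraph n g d) :
    2 * ∑ i, g (.x i) ≤ 7 * (d - n) := by
  have hedge (i : ZMod 7) : g (.x i) + g (.x (i + 1)) ≤ d - n :=
    h.add_le_of_isMaximalClique_pair (x_adj i).ne
      (SimpleGraph.isMaximalClique_pair (x_adj i) (x_no_common_neighbor i))
  have := Finset.sum_le_sum fun i (_ : i ∈ Finset.univ) => hedge i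
  rw [Finset.sum_add_distrib, sum_comp_add_right (fun i => g (.x i))] at this
  simp only [Finset.sum_const, Finset.card_univ, ZMod.card, nsmul_eq_mul] at this
  push_cast at this
  linarith

theorem sum_pentagons_le (h : memU paperGraph n g d) :
    2 * (2 * ∑ i, g (.x i) + 2 * ∑ i, g (.y i) + ∑ i, g (.z i)) ≤ 7 * (4 * d - 2 * n) := by
  have hpent (k : ZMod 7) :
      2 * (g (.x k) + g (.y k) + g (.z k) + g (.y (k + 1)) + g (.x (k + 1))) ≤ 4 * d - 2 * n := by
    have := h.two_mul_sum_le_of_chordless (pentagon k) (by norm_num) (by decide)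
      (pentagon_injective k) (pentagon_adj k) (pentagon_chordless k)
    rw [show ∑ i, g (pentagon k i) = ∑ i : Fin 5, g (pentagon k i) from rfl,
      Fin.sum_univ_five] at this
    simp only [pentagon] at this
    push_cast at this
    linarith
  have := Finset.sum_le_sum fun k (_ : k ∈ Finset.univ) => hpent k
  simp only [← Finset.mul_sum, Finset.sum_add_distrib, sum_comp_add_right (fun i => g (.x i)),
    sum_comp_add_right (fun i => g (.y i)), Finset.sum_const, Finset.card_univ, ZMod.card,
    nsmul_eq_mul] at this
  push_cast at this
  linarith

end memU

theorem sum_add_sum_eq_of_add_eq {ι α M : Type*} [Fintype ι] [AddCommMonoid M] {g₁ g₂ μ : α → M}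
    (hsum : g₁ + g₂ = μ) (f : ι → α) : ∑ i, g₁ (f i) + ∑ i, g₂ (f i) = ∑ i, μ (f i) := by
  simp [← hsum, Finset.sum_add_distrib]

/-- `(μ, 10)` is not a sum of two elements of `U^(1)`. -/
theorem stmt14 : ¬ ∃ (μ₁ μ₂ : Vtx → ℤ) (d₁ d₂ : ℤ),
    memU paperGraph 1 μ₁ d₁ ∧ memU paperGraph 1 μ₂ d₂ ∧
    μ₁ + μ₂ = muPaper ∧ d₁ + d₂ = 10 := by
  rintro ⟨μ₁, μ₂, d₁, d₂, h₁, h₂, hsum, hd⟩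
  have hx : ∑ i, μ₁ (.x i) + ∑ i, μ₂ (.x i) = 28 := by
    simp [sum_add_sum_eq_of_add_eq hsum, muPaper]
  have hy : ∑ i, μ₁ (.y i) + ∑ i, μ₂ (.y i) = 21 := by
    simp [sum_add_sum_eq_of_add_eq hsum, muPaper]
  have hz : ∑ i, μ₁ (.z i) + ∑ i, μ₂ (.z i) = 28 := by
    simp [sum_add_sum_eq_of_add_eq hsum, muPaper]
  have := h₁.two_mul_sum_x_le
  have := h₂.two_mul_sum_x_le
  have := h₁.two_mul_sum_z_le
  have := h₂.two_mul_sum_z_le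
  have := h₁.two_mul_sum_x_le_of_edges
  have := h₂.two_mul_sum_x_le_of_edges
  have := h₁.sum_pentagons_le
  have := h₂.sum_pentagons_le
  omega
end

section
/- Let G be the graph on the 21 vertices {x_i, y_i, z_i : i ∈ ℤ/7ℤ} with edges {x_i, x_{i+1}}, {x_i, y_i}, {y_i, z_i}, {z_i, y_{i+1}}, {z_i, z_{i+3}} (indices modulo 7). Define ν : V → ℝ by ν(x_i) = ν(z_i) = 3/7 and ν(y_i) = 5/14 for all i. Then ν ∈ HSTAB(G). -/
variable {V : Type*}

/-- The function `ν` with `ν(x_i) = ν(z_i) = 3/7`, `ν(y_i) = 5/14`. -/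
noncomputable def nuPaper : Vtx → ℝ
  | Vtx.x _ => 3 / 7
  | Vtx.y _ => 5 / 14
  | Vtx.z _ => 3 / 7

/-!
Write ν = 3/7 − [y]/14. The graph is triangle-free, so a clique has at most two vertices and
weight at most 6/7. A closed walk of odd length m with k visits to y-vertices has weight
3m/7 − k/14, which is at most (m − 1)/2 exactly when m + k ≥ 7. This is automatic for m ≥ 7,
m = 3 is excluded by triangle-freeness, and for m = 5 a finite check shows that every closed
5-walk visits y-vertices at least twice.
-/

namespace SimpleGraph

variable {G : SimpleGraph V}

theorem IsClique.subsingleton_or_eq_pair (hG : G.CliqueFree 3) {K : Set V} (hK : G.IsClique K) :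
    K.Subsingleton ∨ ∃ u v, u ≠ v ∧ K = {u, v} := by
  classical
  refine K.subsingleton_or_nontrivial.imp id fun ⟨u, hu, v, hv, huv⟩ => ⟨u, v, huv, ?_⟩
  refine Set.Subset.antisymm (fun w hw => ?_)
    (Set.insert_subset hu (Set.singleton_subset_iff.2 hv))
  by_contra hw'
  simp only [Set.mem_insert_iff, Set.mem_singleton_iff, not_or] at hw'
  exact hG {u, v, w} (is3Clique_triple_iff.2
    ⟨hK hu hv huv, hK hu hw (Ne.symm hw'.1), hK hv hw (Ne.symm hw'.2)⟩)

theorem IsClique.finsum_le_one (hG : G.CliqueFree 3) {f : V → ℝ} (hf : ∀ v, f v ≤ 1 / 2)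
    {K : Set V} (hK : G.IsClique K) : ∑ᶠ v ∈ K, f v ≤ 1 := by
  obtain hK' | ⟨u, v, huv, rfl⟩ := hK.subsingleton_or_eq_pair hG
  · obtain rfl | ⟨a, rfl⟩ := hK'.eq_empty_or_singleton
    · simp
    · rw [finsum_mem_singleton]
      linarith [hf a]
  · rw [finsum_mem_pair huv]
    linarith [hf u, hf v]

theorem CliqueFree.not_forall_adj_zmod_three (hG : G.CliqueFree 3) (c : ZMod 3 → V) :
    ¬ ∀ i, G.Adj (c i) (c (i + 1)) := by
  classical
  intro hc
  exact hG {c 0, c 1, c 2} (is3Clique_triple_iff.2 ⟨hc 0, (hc 2).symm, hc 1⟩)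

end SimpleGraph

theorem IsOddCycleSet.finsum_le_of_forall_closed_walk {G : SimpleGraph V} {f : V → ℝ}
    {C : Set V} (hC : IsOddCycleSet G C)
    (h : ∀ (m : ℕ) [NeZero m] (c : ZMod m → V), 3 ≤ m → Odd m →
      (∀ i, G.Adj (c i) (c (i + 1))) → ∑ i, f (c i) ≤ ((m : ℝ) - 1) / 2) :
    ∑ᶠ v ∈ C, f v ≤ ((C.ncard : ℝ) - 1) / 2 := by
  obtain ⟨m, c, hm, hodd, hinj, hadj, rfl⟩ := hC
  have : NeZero m := ⟨by omega⟩
  rw [finsum_mem_range hinj, finsum_eq_sum_of_fintype, Set.ncard_range_of_injective hinj,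
    Nat.card_zmod]
  exact h m c hm hodd hadj

def yIndicator : Vtx → ℕ
  | .y _ => 1
  | _ => 0

set_option maxRecDepth 100000 in
theorem paperGraph_cliqueFree_three : paperGraph.CliqueFree 3 := by
  have triangle_free : ∀ a b c, paperGraph.Adj a b → paperGraph.Adj a c →
      paperGraph.Adj b c → False := by
    decide
  intro s hs
  obtain ⟨a, b, c, hab, hac, hbc, -⟩ := SimpleGraph.is3Clique_iff.1 hs
  exact triangle_free a b c hab hac hbc

set_option maxRecDepth 100000 in
theorem two_le_yIndicator_of_closed_walk_five :
    ∀ v₀ v₁, paperGraph.Adj v₀ v₁ → ∀ v₂, paperGraph.Adj v₁ v₂ → ∀ v₃, paperGraph.Adj v₂ v₃ →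
      ∀ v₄, paperGraph.Adj v₃ v₄ → paperGraph.Adj v₄ v₀ →
        2 ≤ yIndicator v₀ + yIndicator v₁ + yIndicator v₂ + yIndicator v₃ + yIndicator v₄ := by
  decide

theorem seven_le_add_sum_yIndicator {m : ℕ} [NeZero m] (c : ZMod m → Vtx) (hm : 3 ≤ m)
    (hodd : Odd m) (hc : ∀ i, paperGraph.Adj (c i) (c (i + 1))) :
    7 ≤ m + ∑ i, yIndicator (c i) := by
  obtain rfl | rfl | h7 : m = 3 ∨ m = 5 ∨ 7 ≤ m := by
    obtain ⟨k, rfl⟩ := hodd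
    omega
  · exact absurd hc (paperGraph_cliqueFree_three.not_forall_adj_zmod_three c)
  · have h5 := two_le_yIndicator_of_closed_walk_five (c 0) (c 1) (hc 0) (c 2) (hc 1) (c 3) (hc 2)
      (c 4) (hc 3) (hc 4)
    have hsum : ∑ i, yIndicator (c i) = _ := Fin.sum_univ_five fun i : Fin 5 => yIndicator (c i)
    omega
  · omega

theorem nuPaper_eq (v : Vtx) : nuPaper v = 3 / 7 - yIndicator v / 14 := by
  cases v <;> norm_num [nuPaper, yIndicator]

theorem nuPaper_nonneg (v : Vtx) : 0 ≤ nuPaper v := by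
  cases v <;> norm_num [nuPaper]

theorem nuPaper_le_half (v : Vtx) : nuPaper v ≤ 1 / 2 := by
  cases v <;> norm_num [nuPaper]

theorem sum_nuPaper_le {m : ℕ} [NeZero m] (c : ZMod m → Vtx) (hm : 3 ≤ m) (hodd : Odd m)
    (hc : ∀ i, paperGraph.Adj (c i) (c (i + 1))) :
    ∑ i, nuPaper (c i) ≤ ((m : ℝ) - 1) / 2 := by
  have h7 : (7 : ℝ) ≤ m + ∑ i, (yIndicator (c i) : ℝ) := by
    exact_mod_cast seven_le_add_sum_yIndicator c hm hodd hc
  simp only [nuPaper_eq, Finset.sum_sub_distrib, Finset.sum_const, Finset.card_univ, ZMod.card,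
    ← Finset.sum_div, nsmul_eq_mul]
  linarith

/-- `ν ∈ HSTAB(G)` for the example graph. -/
theorem stmt15 : memHSTAB paperGraph nuPaper :=
  ⟨nuPaper_nonneg,
    fun _ hK => hK.finsum_le_one paperGraph_cliqueFree_three nuPaper_le_half,
    fun _ hC => hC.finsum_le_of_forall_closed_walk fun _ _ c hm hodd hc =>
      sum_nuPaper_le c hm hodd hc⟩
end

section
/- Let G = (V, E) be a finite simple graph, let C be a chordless odd cycle of G of length at least 5, let c₀ ∈ C, and let N be an integer with N > |V|. Define g : V → ℤ by g(z) = N(|C|−1) for z ∈ C∖{c₀}, g(c₀) = N(|C|−1) − 1, and g(z) = 1 for z ∈ V∖C, and set d = 2N|C|. Then (g, d) ∈ U^(1) and 2·g⁺(C) = d·(|C|−1) − 2. -/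
variable {V : Type*}

lemma zmod_cast_ne_zero {m k : ℕ} (hm : 5 ≤ m) (hk0 : 0 < k) (hk : k ≤ 4) :
    ((k : ZMod m)) ≠ 0 := by
  intro h
  rw [ZMod.natCast_eq_zero_iff] at h
  have := Nat.le_of_dvd hk0 h
  omega

lemma zmod_ncard_range {V : Type*} {m : ℕ} (hm : m ≠ 0) {c : ZMod m → V}
    (hinj : Function.Injective c) : (Set.range c).ncard = m := by
  haveI : NeZero m := ⟨hm⟩
  rw [← Nat.card_coe_set_eq, Nat.card_range_of_injective hinj,
    Nat.card_eq_fintype_card, ZMod.card]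

lemma cycle_subset_cycle {V : Type*} (G : SimpleGraph V) {m m' : ℕ}
    {c : ZMod m → V} {c' : ZMod m' → V}
    (hm : 3 ≤ m) (hinj : Function.Injective c)
    (hchord : ∀ i j, G.Adj (c i) (c j) → j = i + 1 ∨ i = j + 1)
    (hm' : 3 ≤ m') (hodd' : Odd m') (hinj' : Function.Injective c')
    (hadj' : ∀ i, G.Adj (c' i) (c' (i + 1)))
    (hsub : Set.range c' ⊆ Set.range c) :
    Set.range c' = Set.range c := by
  haveI : NeZero m := ⟨by omega⟩
  haveI : NeZero m' := ⟨by omega⟩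
  have hex : ∀ i : ZMod m', ∃ j : ZMod m, c j = c' i := fun i => hsub ⟨i, rfl⟩
  choose f hf using hex
  have hstep : ∀ i : ZMod m', f (i + 1) = f i + 1 ∨ f i = f (i + 1) + 1 := by
    intro i
    apply hchord
    rw [hf, hf]; exact hadj' i
  classical
  set S : ℤ := ∑ i : ZMod m', (if f (i + 1) = f i + 1 then (1 : ℤ) else -1) with hS
  have key : ∀ i : ZMod m',
      ((if f (i + 1) = f i + 1 then (1 : ℤ) else -1 : ℤ) : ZMod m) = f (i + 1) - f i := by
    intro i
    split_ifs with h'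
    · rw [h']; push_cast; ring
    · have h := (hstep i).resolve_left h'
      rw [h]; push_cast; ring
  have hcast : ((S : ℤ) : ZMod m) = 0 := by
    rw [hS, Int.cast_sum]
    rw [Finset.sum_congr rfl fun i _ => key i, Finset.sum_sub_distrib, sub_eq_zero]
    exact Fintype.sum_equiv (Equiv.addRight 1) _ _ (fun i => rfl)
  have hdvd : (m : ℤ) ∣ S := (ZMod.intCast_zmod_eq_zero_iff_dvd S m).mp hcast
  set T : ℤ := ∑ i : ZMod m', (if f (i + 1) = f i + 1 then (1 : ℤ) else 0) with hT
  have hST : S + (m' : ℤ) = 2 * T := by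
    have h1 : ∀ i : ZMod m', (if f (i + 1) = f i + 1 then (1 : ℤ) else -1) + 1
        = 2 * (if f (i + 1) = f i + 1 then (1 : ℤ) else 0) := by
      intro i; split_ifs <;> ring
    calc S + (m' : ℤ)
        = ∑ i : ZMod m', ((if f (i + 1) = f i + 1 then (1 : ℤ) else -1) + 1) := by
          rw [Finset.sum_add_distrib, Finset.sum_const, Finset.card_univ, ZMod.card]
          simp [hS, nsmul_eq_mul]
      _ = 2 * T := by rw [Finset.sum_congr rfl fun i _ => h1 i, ← Finset.mul_sum, hT]
  have hSne : S ≠ 0 := by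
    obtain ⟨r, hr⟩ := hodd'
    intro h0
    rw [h0] at hST
    omega
  have habs : |S| ≤ (m' : ℤ) := by
    calc |S| ≤ ∑ i : ZMod m', |if f (i + 1) = f i + 1 then (1 : ℤ) else -1| :=
          Finset.abs_sum_le_sum_abs _ _
      _ = ∑ _i : ZMod m', (1 : ℤ) := by
          apply Finset.sum_congr rfl; intro i _; split_ifs <;> norm_num
      _ = (m' : ℤ) := by
          rw [Finset.sum_const, Finset.card_univ, ZMod.card]; simp
  have hmm' : (m : ℤ) ≤ (m' : ℤ) := by
    have h1 : (m : ℤ) ≤ |S| :=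
      Int.le_of_dvd (abs_pos.mpr hSne) ((dvd_abs _ _).mpr hdvd)
    linarith
  have hmm'' : m ≤ m' := by exact_mod_cast hmm'
  apply Set.eq_of_subset_of_ncard_le hsub ?_ (Set.finite_range c)
  rw [zmod_ncard_range (by omega) hinj, zmod_ncard_range (by omega) hinj']
  exact hmm''

lemma clique_inter_cycle {V : Type*} (G : SimpleGraph V) {m : ℕ} {c : ZMod m → V}
    (hm : 5 ≤ m) (hinj : Function.Injective c)
    (hchord : ∀ i j, G.Adj (c i) (c j) → j = i + 1 ∨ i = j + 1)
    {K : Set V} (hK : G.IsClique K) : (K ∩ Set.range c).ncard ≤ 2 := by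
  haveI : NeZero m := ⟨by omega⟩
  by_contra hcon
  push_neg at hcon
  rw [Set.two_lt_ncard ((Set.finite_range c).subset Set.inter_subset_right)] at hcon
  obtain ⟨x, hx, y, hy, z, hz, hxy, hxz, hyz⟩ := hcon
  obtain ⟨i, rfl⟩ := hx.2
  obtain ⟨j, rfl⟩ := hy.2
  obtain ⟨k, rfl⟩ := hz.2
  have hij : i ≠ j := fun h => hxy (by rw [h])
  have hik : i ≠ k := fun h => hxz (by rw [h])
  have hjk : j ≠ k := fun h => hyz (by rw [h])
  have h1 := hchord i j (hK hx.1 hy.1 hxy)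
  have h2 := hchord j k (hK hy.1 hz.1 hyz)
  have h3 := hchord i k (hK hx.1 hz.1 hxz)
  rcases h1 with h1 | h1 <;> rcases h2 with h2 | h2 <;> rcases h3 with h3 | h3
  · exact zmod_cast_ne_zero hm one_pos (by norm_num)
      (by push_cast; linear_combination h3 - h1 - h2)
  · exact zmod_cast_ne_zero hm (by norm_num : 0 < 3) (by norm_num)
      (by push_cast; linear_combination -h1 - h2 - h3)
  · exact zmod_cast_ne_zero hm one_pos (by norm_num)
      (by push_cast; linear_combination h1 - h2 - h3)
  · exact hij (h3.trans h2.symm)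
  · exact hik (h1.trans h2.symm)
  · exact hik (h1.trans h2.symm)
  · exact zmod_cast_ne_zero hm (by norm_num : 0 < 3) (by norm_num)
      (by push_cast; linear_combination -h1 - h2 - h3)
  · exact hij (h3.trans h2.symm)

/-- the element `(g, 2N|C|)` built from a chordless odd cycle `C`
of length at least 5 lies in `U^(1)` and attains equality in the cycle
inequality for `C`. -/
theorem stmt19 {V : Type*} [Fintype V] (G : SimpleGraph V) (C : Set V)
    (hC : IsChordlessOddCycleSet G C) (h5 : 5 ≤ C.ncard)
    (c₀ : V) (hc₀ : c₀ ∈ C) (N : ℤ) (hN : (Fintype.card V : ℤ) < N)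
    (g : V → ℤ)
    (hg1 : ∀ z ∈ C, z ≠ c₀ → g z = N * ((C.ncard : ℤ) - 1))
    (hg0 : g c₀ = N * ((C.ncard : ℤ) - 1) - 1)
    (hg2 : ∀ z ∉ C, g z = 1) :
    memU G 1 g (2 * N * (C.ncard : ℤ)) ∧
    2 * (∑ᶠ v ∈ C, g v) = 2 * N * (C.ncard : ℤ) * ((C.ncard : ℤ) - 1) - 2 := by
  classical
  obtain ⟨m, c, hm3, hmodd, hcinj, hcadj, hcchord, hCeq⟩ := hC
  have hCcard : C.ncard = m := by rw [hCeq]; exact zmod_ncard_range (by omega) hcinj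
  rw [hCcard] at h5 hg1 hg0 ⊢
  have hm5 : 5 ≤ m := h5
  have hVm : (m : ℤ) ≤ (Fintype.card V : ℤ) := by
    have h := Set.ncard_le_ncard (Set.subset_univ C) Set.finite_univ
    rw [hCcard, Set.ncard_univ, Nat.card_eq_fintype_card] at h
    exact_mod_cast h
  have hm5' : (5 : ℤ) ≤ (m : ℤ) := by exact_mod_cast hm5
  have hN6 : (6 : ℤ) ≤ N := by linarith
  set M : ℤ := N * ((m : ℤ) - 1) with hM
  have hM2 : 2 ≤ M := by nlinarith
  have hMnn : (0 : ℤ) ≤ M := by linarith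
  have hglb : ∀ v, 1 ≤ g v := by
    intro v
    by_cases hv : v ∈ C
    · by_cases hv0 : v = c₀
      · rw [hv0, hg0]; linarith
      · rw [hg1 v hv hv0]; linarith
    · rw [hg2 v hv]
  have hgub : ∀ v ∈ C, g v ≤ M := by
    intro v hv
    by_cases hv0 : v = c₀
    · rw [hv0, hg0]; linarith
    · rw [hg1 v hv hv0]
  have hfin : ∀ s : Set V, (∑ᶠ v ∈ s, g v) = ∑ v ∈ s.toFinset, g v := by
    intro s
    rw [← finsum_mem_coe_finset, Set.coe_toFinset]
  have hCfcard : C.toFinset.card = m := by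
    rw [← Set.ncard_eq_toFinset_card', hCcard]
  have hc₀f : c₀ ∈ C.toFinset := Set.mem_toFinset.mpr hc₀
  have hCsum : (∑ᶠ v ∈ C, g v) = (m : ℤ) * M - 1 := by
    rw [hfin, ← Finset.add_sum_erase _ g hc₀f, hg0]
    have hcongr : ∑ v ∈ C.toFinset.erase c₀, g v = ∑ _v ∈ C.toFinset.erase c₀, M :=
      Finset.sum_congr rfl (fun v hv =>
        hg1 v (Set.mem_toFinset.mp (Finset.mem_of_mem_erase hv)) (Finset.ne_of_mem_erase hv))
    rw [hcongr, Finset.sum_const, Finset.card_erase_of_mem hc₀f, hCfcard, nsmul_eq_mul,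
      Nat.cast_sub (by omega : 1 ≤ m)]
    push_cast
    ring
  refine ⟨⟨hglb, ?_, ?_⟩, ?_⟩
  · -- maximal cliques
    intro K hK
    rw [hfin]
    have hsplit : ∑ v ∈ K.toFinset \ (K.toFinset ∩ C.toFinset), g v
        + ∑ v ∈ K.toFinset ∩ C.toFinset, g v = ∑ v ∈ K.toFinset, g v :=
      Finset.sum_sdiff Finset.inter_subset_left
    rw [← hsplit]
    have hcard2 : ((K.toFinset ∩ C.toFinset).card : ℤ) ≤ 2 := by
      have h := clique_inter_cycle G hm5 hcinj hcchord hK.1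
      rw [← hCeq, Set.ncard_eq_toFinset_card', Set.toFinset_inter] at h
      exact_mod_cast h
    have hb1 : ∑ v ∈ K.toFinset ∩ C.toFinset, g v
        ≤ ((K.toFinset ∩ C.toFinset).card : ℤ) * M := by
      rw [← nsmul_eq_mul]
      apply Finset.sum_le_card_nsmul
      intro v hv
      exact hgub v (Set.mem_toFinset.mp (Finset.mem_of_mem_inter_right hv))
    have hb2 : ∑ v ∈ K.toFinset \ (K.toFinset ∩ C.toFinset), g v
        = ((K.toFinset \ (K.toFinset ∩ C.toFinset)).card : ℤ) := by
      rw [Finset.sum_congr rfl (fun v hv => ?_), Finset.sum_const, nsmul_eq_mul, mul_one]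
      rw [Finset.sdiff_inter_self_left, Finset.mem_sdiff] at hv
      exact hg2 v (fun h => hv.2 (Set.mem_toFinset.mpr h))
    have hb3 : ((K.toFinset \ (K.toFinset ∩ C.toFinset)).card : ℤ) ≤ (Fintype.card V : ℤ) := by
      exact_mod_cast Finset.card_le_univ _
    have hAM : ((K.toFinset ∩ C.toFinset).card : ℤ) * M ≤ 2 * M :=
      mul_le_mul_of_nonneg_right hcard2 hMnn
    have h2M : 2 * M = 2 * N * (m : ℤ) - 2 * N := by rw [hM]; ring
    rw [hb2]
    linarith
  · -- odd cycle constraints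
    intro C' hC' h5'
    by_cases hEq : C' = C
    · subst hEq
      rw [hCsum, hCcard]
      apply le_of_eq
      rw [hM]; ring
    · obtain ⟨m', c', hm3', hmodd', hcinj', hcadj', hcchord', hC'eq⟩ := hC'
      have hC'card : C'.ncard = m' := by rw [hC'eq]; exact zmod_ncard_range (by omega) hcinj'
      have hnotsub : ¬ C' ⊆ C := by
        intro hsub
        apply hEq
        rw [hC'eq, hCeq]
        rw [hC'eq, hCeq] at hsub
        exact cycle_subset_cycle G hm3 hcinj hcchord hm3' hmodd' hcinj' hcadj' hsub
      obtain ⟨v₀, hv₀C', hv₀C⟩ := Set.not_subset.mp hnotsub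
      rw [hfin]
      set Kf := C'.toFinset with hKf
      have hv₀f : v₀ ∈ Kf := Set.mem_toFinset.mpr hv₀C'
      have hKfcard : Kf.card = m' := by rw [hKf, ← Set.ncard_eq_toFinset_card', hC'card]
      have hsplit : ∑ v ∈ Kf \ (Kf ∩ C.toFinset), g v
          + ∑ v ∈ Kf ∩ C.toFinset, g v = ∑ v ∈ Kf, g v :=
        Finset.sum_sdiff Finset.inter_subset_left
      rw [← hsplit]
      set k : ℕ := (Kf ∩ C.toFinset).card with hk
      have hksub : Kf ∩ C.toFinset ⊆ Kf.erase v₀ := by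
        intro v hv
        rw [Finset.mem_inter] at hv
        refine Finset.mem_erase.mpr ⟨?_, hv.1⟩
        rintro rfl
        exact hv₀C (Set.mem_toFinset.mp hv.2)
      have hkle : k ≤ m' - 1 := by
        have := Finset.card_le_card hksub
        rwa [Finset.card_erase_of_mem hv₀f, hKfcard] at this
      have hb1 : ∑ v ∈ Kf ∩ C.toFinset, g v ≤ (k : ℤ) * M := by
        rw [← nsmul_eq_mul]
        apply Finset.sum_le_card_nsmul
        intro v hv
        exact hgub v (Set.mem_toFinset.mp (Finset.mem_of_mem_inter_right hv))
      have hb2 : ∑ v ∈ Kf \ (Kf ∩ C.toFinset), g v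
          = ((Kf \ (Kf ∩ C.toFinset)).card : ℤ) := by
        rw [Finset.sum_congr rfl (fun v hv => ?_), Finset.sum_const, nsmul_eq_mul, mul_one]
        rw [Finset.sdiff_inter_self_left, Finset.mem_sdiff] at hv
        exact hg2 v (fun h => hv.2 (Set.mem_toFinset.mpr h))
      have hdcard : (Kf \ (Kf ∩ C.toFinset)).card = m' - k := by
        have h := Finset.card_inter_add_card_sdiff Kf C.toFinset
        rw [Finset.sdiff_inter_self_left]
        omega
      have hm'5 : 5 ≤ m' := by rwa [hC'card] at h5'
      have hm'V : (m' : ℤ) ≤ (Fintype.card V : ℤ) := by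
        have h := Set.ncard_le_ncard (Set.subset_univ C') Set.finite_univ
        rw [hC'card, Set.ncard_univ, Nat.card_eq_fintype_card] at h
        exact_mod_cast h
      rw [hb2, hdcard, hC'card]
      have hkZ : (k : ℤ) ≤ (m' : ℤ) - 1 := by
        have h := hkle
        have hkc : ((k : ℕ) : ℤ) ≤ ((m' - 1 : ℕ) : ℤ) := by exact_mod_cast h
        rw [Nat.cast_sub (by omega)] at hkc
        simpa using hkc
      have hmk : ((m' - k : ℕ) : ℤ) = (m' : ℤ) - (k : ℤ) := by
        have hk' : k ≤ m' := by omega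
        push_cast [Nat.cast_sub hk']
        ring
      rw [hmk]
      have hk0 : (0 : ℤ) ≤ (k : ℤ) := Int.natCast_nonneg _
      have hm'5' : (5 : ℤ) ≤ (m' : ℤ) := by exact_mod_cast hm'5
      have hQ : (k : ℤ) * M ≤ ((m' : ℤ) - 1) * M := mul_le_mul_of_nonneg_right hkZ hMnn
      have hexp : ((m' : ℤ) - 1) * M = N * (m : ℤ) * ((m' : ℤ) - 1) - N * ((m' : ℤ) - 1) := by
        rw [hM]; ring
      have h4N : N * 4 ≤ N * ((m' : ℤ) - 1) :=
        mul_le_mul_of_nonneg_left (by linarith) (by linarith)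
      linarith
  · rw [hCsum, hM]; ring
end
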